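/- arXiv:1406.1807 — 3 statements merged into one kernel-verified Lean document; each statement's English description precedes it below -/
import Mathlib

section
/- Let λ, δ, τ, μ, ω, M_p be positive real numbers and set R₀ = λτ/(δμ). The system of equations λ = δV + τVQ/(1 + ωM_pQ), μ = τV/(1 + ωM_pQ) in unknowns (V, Q) has exactly one solution with Q ≠ 0, namely V = (μ + λωM_p)/(τ + δωM_p) and Q = (R₀ − 1)/(τ/δ + ωM_p); moreover this Q is positive if and only if R₀ > 1. -/
/-!
Since `μ ≠ 0`, the second equation forces `1 + ω M_p Q ≠ 0` and `τ V = μ (1 + ω M_p Q)`, so the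
incidence term of the first equation equals `μ Q` and the system becomes linear:
`λ = δ V + μ Q` and `τ V = μ + ω M_p μ Q`. Eliminating `μ Q` gives `V` and then `Q`.
Conversely, at that `(V, Q)` the same two linear relations hold, and `1 + ω M_p Q = τ V / μ` is
nonzero because `μ + λ ω M_p ≠ 0`. The sign of `Q` is the sign of `λ τ - δ μ`, i.e. of `R₀ - 1`.
-/

section EndemicSystem

variable {K : Type*} [Field K] {lam del tau mu om Mp V Q : K}

theorem endemic_eq_of_system (hmu : mu ≠ 0) (hA : tau + del * om * Mp ≠ 0)
    (hlam : lam = del * V + tau * V * Q / (1 + om * Mp * Q))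
    (hmuV : mu = tau * V / (1 + om * Mp * Q)) :
    V = (mu + lam * om * Mp) / (tau + del * om * Mp) ∧
      Q = (lam * tau - del * mu) / (mu * (tau + del * om * Mp)) := by
  have hD : 1 + om * Mp * Q ≠ 0 := by
    rintro hD
    rw [hD, div_zero] at hmuV
    exact hmu hmuV
  have hτV : tau * V = mu * (1 + om * Mp * Q) := by
    rw [hmuV, div_mul_cancel₀ _ hD]
  have hlin : lam = del * V + mu * Q := by
    rwa [mul_div_right_comm, ← hmuV] at hlam
  have hV : V * (tau + del * om * Mp) = mu + lam * om * Mp := by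
    linear_combination hτV - om * Mp * hlin
  refine ⟨eq_div_of_mul_eq hA hV, eq_div_of_mul_eq (mul_ne_zero hmu hA) ?_⟩
  linear_combination -(tau + del * om * Mp) * hlin - del * hV

theorem system_of_endemic_eq (hmu : mu ≠ 0) (htau : tau ≠ 0)
    (hA : tau + del * om * Mp ≠ 0) (hB : mu + lam * om * Mp ≠ 0)
    (hV : V = (mu + lam * om * Mp) / (tau + del * om * Mp))
    (hQ : Q = (lam * tau - del * mu) / (mu * (tau + del * om * Mp))) :
    lam = del * V + tau * V * Q / (1 + om * Mp * Q) ∧ mu = tau * V / (1 + om * Mp * Q) := by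
  have hV' := (eq_div_iff hA).mp hV
  have hQ' := (eq_div_iff (mul_ne_zero hmu hA)).mp hQ
  have hτV : (1 + om * Mp * Q) * mu = tau * V :=
    mul_right_cancel₀ hA (by linear_combination om * Mp * hQ' - tau * hV')
  have hlin : lam = del * V + mu * Q :=
    mul_right_cancel₀ hA (by linear_combination -del * hV' - hQ')
  have hD : 1 + om * Mp * Q ≠ 0 := by
    refine left_ne_zero_of_mul (hτV ▸ mul_ne_zero htau ?_)
    rw [hV]
    exact div_ne_zero hB hA
  have hmuV : mu = tau * V / (1 + om * Mp * Q) := eq_div_of_mul_eq hD (by rw [mul_comm, hτV])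
  refine ⟨?_, hmuV⟩
  rwa [mul_div_right_comm, ← hmuV]

end EndemicSystem

theorem reproduction_number_sub_one_div_eq {K : Type*} [Field K] {lam del tau mu om Mp : K}
    (hdel : del ≠ 0) (hmu : mu ≠ 0) :
    (lam * tau / (del * mu) - 1) / (tau / del + om * Mp) =
      (lam * tau - del * mu) / (mu * (tau + del * om * Mp)) := by
  rw [div_sub_one (mul_ne_zero hdel hmu), div_add' _ _ _ hdel, div_div_div_eq]
  field_simp

theorem stmt_0 (lam del tau mu om Mp : ℝ)
    (hlam : 0 < lam) (hdel : 0 < del) (htau : 0 < tau) (hmu : 0 < mu)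
    (hom : 0 < om) (hMp : 0 < Mp)
    (R0 Vinf Qinf : ℝ)
    (hR0 : R0 = lam * tau / (del * mu))
    (hV : Vinf = (mu + lam * om * Mp) / (tau + del * om * Mp))
    (hQ : Qinf = (R0 - 1) / (tau / del + om * Mp)) :
    (lam = del * Vinf + tau * Vinf * Qinf / (1 + om * Mp * Qinf) ∧
      mu = tau * Vinf / (1 + om * Mp * Qinf)) ∧
    (∀ V Q : ℝ, Q ≠ 0 →
      lam = del * V + tau * V * Q / (1 + om * Mp * Q) →
      mu = tau * V / (1 + om * Mp * Q) →
      V = Vinf ∧ Q = Qinf) ∧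
    (0 < Qinf ↔ 1 < R0) := by
  rw [hR0, reproduction_number_sub_one_div_eq hdel.ne' hmu.ne'] at hQ
  have hA : tau + del * om * Mp ≠ 0 := by positivity
  have hB : mu + lam * om * Mp ≠ 0 := by positivity
  refine ⟨system_of_endemic_eq hmu.ne' htau.ne' hA hB hV hQ, fun V Q _ h₁ h₂ ↦ ?_, ?_⟩
  · rw [hV, hQ]
    exact endemic_eq_of_system hmu.ne' hA h₁ h₂
  · rw [hQ, hR0, div_pos_iff_of_pos_right (by positivity), one_lt_div (by positivity), sub_pos]
end

section
/- Let λ, δ, τ, μ > 0 with R₀ = λτ/(δμ) < 1, and set V̄ = λ/δ. Suppose V, P : [0,∞) → [0,∞) are C¹ and satisfy V' = λ − V(δ + fP) and P' = P(fV − μ) where f = f(t) ∈ (0, τ] for all t. Then the function L(t) = V̄ P(t) + (V(t) − V̄)²/2 satisfies L'(t) ≤ −min(μ − τV̄, 2δ) L(t), and hence L(t) ≤ L(0) e^{−min(μ−τV̄,2δ) t} for all t ≥ 0. -/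
/-!
With `lam = del * Vbar`, the derivative of `L = Vbar * P + (V - Vbar) ^ 2 / 2` along the flow is
`-(mu - f * Vbar) * Vbar * P - del * (V - Vbar) ^ 2 - (V - Vbar) ^ 2 * f * P`. Since `f ≤ tau` and
`P, f ≥ 0`, each of the first two terms is at most `-min (mu - tau * Vbar) (2 * del)` times the
corresponding summand of `L`, and the last one is nonpositive. With `c` that minimum,
`L t * exp (c * t)` is then antitone, which is the exponential bound.
-/

open Real Set

theorem le_mul_exp_of_hasDerivAt_le_neg_mul {L L' : ℝ → ℝ} {a c : ℝ}
    (hL : ∀ t ≥ a, HasDerivAt L (L' t) t) (hle : ∀ t ≥ a, L' t ≤ -c * L t)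
    {t : ℝ} (ht : a ≤ t) : L t ≤ L a * exp (-c * (t - a)) := by
  have hg : ∀ s ≥ a, HasDerivAt (fun s => L s * exp (c * s))
      (L' s * exp (c * s) + L s * (exp (c * s) * c)) s := fun s hs =>
    (hL s hs).mul ((hasDerivAt_const_mul c).exp)
  have hanti : AntitoneOn (fun s => L s * exp (c * s)) (Ici a) := by
    refine antitoneOn_of_hasDerivWithinAt_nonpos (convex_Ici a)
      (fun s hs => (hg s hs).continuousAt.continuousWithinAt)
      (fun s hs => (hg s (interior_subset hs)).hasDerivWithinAt) fun s hs => ?_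
    have hs : a ≤ s := interior_subset hs
    linarith [mul_le_mul_of_nonneg_right (hle s hs) (exp_pos (c * s)).le]
  have hta : L t * exp (c * t) ≤ L a * exp (c * a) := hanti self_mem_Ici ht ht
  calc L t = L t * exp (c * t) * exp (-(c * t)) := by
        rw [mul_assoc, ← exp_add, add_neg_cancel, exp_zero, mul_one]
    _ ≤ L a * exp (c * a) * exp (-(c * t)) := by gcongr
    _ = L a * exp (-c * (t - a)) := by rw [mul_assoc, ← exp_add]; ring_nf

theorem hasDerivAt_mul_add_sub_sq_div_two {V P : ℝ → ℝ} {V' P' t : ℝ} (a : ℝ)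
    (hV : HasDerivAt V V' t) (hP : HasDerivAt P P' t) :
    HasDerivAt (fun s => a * P s + (V s - a) ^ 2 / 2) (a * P' + (V t - a) * V') t :=
  ((hP.const_mul a).add (((hV.sub_const a).pow 2).div_const 2)).congr_deriv (by push_cast; ring)

theorem lyapunov_rate_le {lam del tau mu Vbar v p φ : ℝ} (hlam : lam = del * Vbar)
    (hVbar : 0 ≤ Vbar) (hp : 0 ≤ p) (hφ : 0 ≤ φ) (hφtau : φ ≤ tau) :
    Vbar * (p * (φ * v - mu)) + (v - Vbar) * (lam - v * (del + φ * p)) ≤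
      -min (mu - tau * Vbar) (2 * del) * (Vbar * p + (v - Vbar) ^ 2 / 2) := by
  have hrate : Vbar * (p * (φ * v - mu)) + (v - Vbar) * (lam - v * (del + φ * p)) =
      -(mu - φ * Vbar) * (Vbar * p) - del * (v - Vbar) ^ 2 - φ * p * (v - Vbar) ^ 2 := by
    subst hlam; ring
  have hc₁ := min_le_left (mu - tau * Vbar) (2 * del)
  have hc₂ := min_le_right (mu - tau * Vbar) (2 * del)
  rw [hrate]
  nlinarith [mul_nonneg (mul_nonneg (sub_nonneg.2 hφtau) hVbar) hp,
    mul_nonneg (mul_nonneg (sub_nonneg.2 hc₁) hVbar) hp,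
    mul_nonneg (sub_nonneg.2 hc₂) (sq_nonneg (v - Vbar)),
    mul_nonneg (mul_nonneg hφ hp) (sq_nonneg (v - Vbar))]

theorem stmt_8_general (lam del tau mu : ℝ)
    (hlam : 0 < lam) (hdel : 0 < del)
    (Vbar : ℝ) (hVbar : Vbar = lam / del)
    (V P f : ℝ → ℝ)
    (hf : ∀ t, 0 < f t ∧ f t ≤ tau)
    (hPnn : ∀ t ≥ (0:ℝ), 0 ≤ P t)
    (hV : ∀ t ≥ (0:ℝ), HasDerivAt V (lam - V t * (del + f t * P t)) t)
    (hP : ∀ t ≥ (0:ℝ), HasDerivAt P (P t * (f t * V t - mu)) t)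
    (L : ℝ → ℝ) (hL : ∀ t, L t = Vbar * P t + (V t - Vbar) ^ 2 / 2) :
    (∀ t ≥ (0:ℝ), deriv L t ≤ -min (mu - tau * Vbar) (2 * del) * L t) ∧
    (∀ t ≥ (0:ℝ), L t ≤ L 0 * Real.exp (-min (mu - tau * Vbar) (2 * del) * t)) := by
  have hVbar_nonneg : 0 ≤ Vbar := hVbar ▸ by positivity
  have hlam_eq : lam = del * Vbar := by rw [hVbar]; field_simp
  have hLderiv : ∀ t ≥ (0:ℝ), HasDerivAt L
      (Vbar * (P t * (f t * V t - mu)) + (V t - Vbar) * (lam - V t * (del + f t * P t))) t :=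
    fun t ht => funext hL ▸ hasDerivAt_mul_add_sub_sq_div_two Vbar (hV t ht) (hP t ht)
  have hdecay : ∀ t ≥ (0:ℝ),
      Vbar * (P t * (f t * V t - mu)) + (V t - Vbar) * (lam - V t * (del + f t * P t)) ≤
        -min (mu - tau * Vbar) (2 * del) * L t := fun t ht =>
    hL t ▸ lyapunov_rate_le hlam_eq hVbar_nonneg (hPnn t ht) (hf t).1.le (hf t).2
  refine ⟨fun t ht => (hLderiv t ht).deriv ▸ hdecay t ht, fun t ht => ?_⟩
  simpa using le_mul_exp_of_hasDerivAt_le_neg_mul hLderiv hdecay ht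

theorem stmt_8 (lam del tau mu : ℝ)
    (hlam : 0 < lam) (hdel : 0 < del) (htau : 0 < tau) (hmu : 0 < mu)
    (hR0 : lam * tau / (del * mu) < 1)
    (Vbar : ℝ) (hVbar : Vbar = lam / del)
    (V P f : ℝ → ℝ)
    (hf : ∀ t, 0 < f t ∧ f t ≤ tau)
    (hVnn : ∀ t ≥ (0:ℝ), 0 ≤ V t) (hPnn : ∀ t ≥ (0:ℝ), 0 ≤ P t)
    (hV : ∀ t ≥ (0:ℝ), HasDerivAt V (lam - V t * (del + f t * P t)) t)
    (hP : ∀ t ≥ (0:ℝ), HasDerivAt P (P t * (f t * V t - mu)) t)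
    (L : ℝ → ℝ) (hL : ∀ t, L t = Vbar * P t + (V t - Vbar) ^ 2 / 2) :
    (∀ t ≥ (0:ℝ), deriv L t ≤ -min (mu - tau * Vbar) (2 * del) * L t) ∧
    (∀ t ≥ (0:ℝ), L t ≤ L 0 * Real.exp (-min (mu - tau * Vbar) (2 * del) * t)) :=
  stmt_8_general lam del tau mu hlam hdel Vbar hVbar V P f hf hPnn hV hP L hL
end

section
/- Let δ, γ, μ, V, Q > 0 and let f : (0,∞) → (0,∞) be differentiable with f(Q) > 0 and f'(Q) < 0. Consider the quantities T = −δ − γμ − Qf(Q) + pVQf'(Q), D = γμVQ(δf'(Q) − f(Q)²), and M = γμ(δ + Qf(Q) − VQf'(Q)) − pδVQf'(Q) + VQf(Q)², where p ≥ 0. Then T < 0, D < 0, and M·T < D. -/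
theorem stmt_10 (del gam mu V Q p : ℝ)
    (hdel : 0 < del) (hgam : 0 < gam) (hmu : 0 < mu) (hV : 0 < V) (hQ : 0 < Q)
    (hp : 0 ≤ p)
    (f : ℝ → ℝ) (hf : DifferentiableAt ℝ f Q)
    (hfQ : 0 < f Q) (hf' : deriv f Q < 0)
    (T D M : ℝ)
    (hT : T = -del - gam * mu - Q * f Q + p * V * Q * deriv f Q)
    (hD : D = gam * mu * V * Q * (del * deriv f Q - (f Q) ^ 2))
    (hM : M = gam * mu * (del + Q * f Q - V * Q * deriv f Q)
        - p * del * V * Q * deriv f Q + V * Q * (f Q) ^ 2) :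
    T < 0 ∧ D < 0 ∧ M * T < D := by
  set a := f Q with ha
  obtain ⟨c, hc, hbc⟩ : ∃ c : ℝ, 0 < c ∧ deriv f Q = -c := ⟨-deriv f Q, by linarith, by ring⟩
  rw [hbc] at hT hD hM
  have hgm := mul_pos hgam hmu
  have hQa := mul_pos hQ hfQ
  have hVQ := mul_pos hV hQ
  have hpc : 0 ≤ p * V * Q * c := by positivity
  refine ⟨by nlinarith, by nlinarith [mul_pos hgm (mul_pos hVQ (mul_pos hdel hc)), mul_pos hgm (mul_pos hVQ (sq_pos_of_pos hfQ))], ?_⟩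
  have hMgt : gam * mu * (V * Q * c) + V * Q * a ^ 2 < M := by
    nlinarith [mul_pos hgm hdel, mul_pos hgm hQa, mul_nonneg (mul_nonneg hp hdel.le) (mul_pos hVQ hc).le]
  have hK : del + gam * mu ≤ -T := by nlinarith
  have hM0 : 0 < M := lt_trans (by positivity) hMgt
  have key : gam * mu * (V * Q * c) * del + V * Q * a ^ 2 * (gam * mu) < M * (-T) :=
    calc gam * mu * (V * Q * c) * del + V * Q * a ^ 2 * (gam * mu)
        ≤ (gam * mu * (V * Q * c) + V * Q * a ^ 2) * (del + gam * mu) := by nlinarith [mul_pos hgm (mul_pos hVQ hc), mul_pos hVQ (sq_pos_of_pos hfQ)]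
      _ < M * (del + gam * mu) := by nlinarith
      _ ≤ M * (-T) := by nlinarith
  nlinarith [key]
end
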